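/- arXiv:2603.04843 — 4 statements merged into one kernel-verified Lean document; each statement's English description precedes it below -/
import Mathlib

section
/- If A_K is Hurwitz (all eigenvalues have negative real part), X̂ solves the Lyapunov equation A_K X̂ + X̂ A_Kᵀ + W = 0, and X solves the Riccati equation A_K X + X A_Kᵀ + β⁻² X S X + W = 0 with S positive semidefinite, then X - X̂ is positive semidefinite. -/
/-!
`Δ = X - X̂` solves the Lyapunov equation `A Δ + Δ Aᵀ + Q = 0` with `Q = β⁻² X S X ⪰ 0`.
Along `M t = exp (t A) Δ exp (t Aᵀ)` one has `M' = -exp (t A) Q exp (t Aᵀ) ⪯ 0`, so `vᵀ M t v`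
decreases from `vᵀ Δ v`. Every eigenvalue of `exp B` is `exp μ` for an eigenvalue `μ` of `B`
(`B` commutes with `exp B`, so it has an eigenvector inside each eigenspace of `exp B`); hence
for Hurwitz `A` the spectral radius of `exp A` is `< 1`, Gelfand's formula gives
`(exp A) ^ k → 0`, and so `vᵀ M k v → 0`, forcing `vᵀ Δ v ≥ 0`.
-/

open Matrix
/-- A real square matrix is Hurwitz if all its (complex) eigenvalues have
negative real part. -/
def IsHurwitz {n : ℕ} (A : Matrix (Fin n) (Fin n) ℝ) : Prop :=
  ∀ μ ∈ spectrum ℂ (A.map (Complex.ofReal ·)), μ.re < 0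

open NormedSpace Filter Topology

attribute [local instance] Matrix.linftyOpNormedRing Matrix.linftyOpNormedAlgebra

theorem tendsto_pow_atTop_nhds_zero_of_spectralRadius_lt_one {A : Type*} [NormedRing A]
    [NormedAlgebra ℂ A] [CompleteSpace A] {a : A} (h : spectralRadius ℂ a < 1) :
    Tendsto (fun k : ℕ => a ^ k) atTop (𝓝 0) := by
  obtain ⟨r, hρr, hr1⟩ := ENNReal.lt_iff_exists_nnreal_btwn.mp h
  have hbound : ∀ᶠ k : ℕ in atTop, ‖a ^ k‖₊ ≤ r ^ k := by
    have hgelfand := spectrum.pow_nnnorm_pow_one_div_tendsto_nhds_spectralRadius a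
    filter_upwards [hgelfand.eventually_lt_const hρr, eventually_ge_atTop 1] with k hk hk1
    have hk0 : (k : ℝ) ≠ 0 := by positivity
    have := ENNReal.rpow_le_rpow hk.le (Nat.cast_nonneg (α := ℝ) k)
    rwa [← ENNReal.rpow_mul, one_div, inv_mul_cancel₀ hk0, ENNReal.rpow_one,
      ENNReal.rpow_natCast, ← ENNReal.coe_pow, ENNReal.coe_le_coe] at this
  rw [tendsto_zero_iff_norm_tendsto_zero]
  refine squeeze_zero' (.of_forall fun k => norm_nonneg _) ?_
    (tendsto_pow_atTop_nhds_zero_of_lt_one r.coe_nonneg (by exact_mod_cast hr1))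
  filter_upwards [hbound] with k hk
  exact_mod_cast hk

theorem hasDerivAt_exp_smul_mul_mul_exp_smul {𝕂 𝔸 : Type*} [RCLike 𝕂] [NormedRing 𝔸]
    [NormedAlgebra 𝕂 𝔸] [CompleteSpace 𝔸] (a b c : 𝔸) (t : 𝕂) :
    HasDerivAt (fun s : 𝕂 => exp (s • a) * c * exp (s • b))
      (exp (t • a) * (a * c + c * b) * exp (t • b)) t := by
  rw [mul_add, add_mul, ← mul_assoc _ a, ← mul_assoc _ c b, mul_assoc _ b]
  exact ((hasDerivAt_exp_smul_const a t).mul_const c).mul (hasDerivAt_exp_smul_const' b t)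

namespace Matrix

variable {ι : Type*} [Fintype ι] [DecidableEq ι]

/- `B v = μ v` says that the rank-one matrix `v 1ᵀ` intertwines the scalar `μ` with `B`, and
intertwining passes to the exponential series. -/
theorem exp_mulVec_of_mulVec_eq_smul {B : Matrix ι ι ℂ} {μ : ℂ} {v : ι → ℂ}
    (hv : B *ᵥ v = μ • v) : exp B *ᵥ v = Complex.exp μ • v := by
  have hV : SemiconjBy (vecMulVec v (1 : ι → ℂ)) (algebraMap ℂ _ μ) B := by
    rw [SemiconjBy, ← Algebra.commutes, ← Algebra.smul_def, mul_vecMulVec, hv, smul_vecMulVec]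
  have hexp : vecMulVec (Complex.exp μ • v) (1 : ι → ℂ) = vecMulVec (exp B *ᵥ v) 1 := by
    rw [smul_vecMulVec, Algebra.smul_def, Algebra.commutes, ← mul_vecMulVec,
      Complex.exp_eq_exp_ℂ, algebraMap_exp_comm]
    exact hV.exp_right
  ext i
  simpa using congrFun₂ hexp.symm i i

theorem spectrum_exp_subset (B : Matrix ι ι ℂ) :
    spectrum ℂ (exp B) ⊆ Complex.exp '' spectrum ℂ B := by
  intro z hz
  rw [← spectrum_toLin', ← Module.End.hasEigenvalue_iff_mem_spectrum] at hz
  have hcomm : Commute (toLin' (exp B)) (toLin' B) :=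
    ((Commute.refl B).exp_left).map toLinAlgEquiv'
  have hE := Module.End.mapsTo_genEigenspace_of_comm hcomm z 1
  have : Nontrivial (Module.End.genEigenspace (toLin' (exp B)) z 1) :=
    Submodule.nontrivial_iff_ne_bot.mpr hz
  obtain ⟨μ, hμ⟩ := Module.End.exists_eigenvalue ((toLin' B).restrict hE)
  obtain ⟨⟨w, hwz⟩, hw⟩ := hμ.exists_hasEigenvector
  have hw0 : w ≠ 0 := fun h => hw.2 (by simp [h])
  have hBw : B *ᵥ w = μ • w := congrArg Subtype.val hw.apply_eq_smul
  refine ⟨μ, ?_, smul_left_injective ℂ hw0 ?_⟩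
  · rw [← spectrum_toLin', ← Module.End.hasEigenvalue_iff_mem_spectrum]
    exact Module.End.hasEigenvalue_of_hasEigenvector
      ⟨Module.End.mem_eigenspace_iff.mpr (by simpa using hBw), hw0⟩
  · dsimp only
    rw [← exp_mulVec_of_mulVec_eq_smul hBw]
    simpa using Module.End.mem_genEigenspace_one.mp hwz

theorem spectralRadius_exp_lt_one {B : Matrix ι ι ℂ} (hB : ∀ μ ∈ spectrum ℂ B, μ.re < 0) :
    spectralRadius ℂ (exp B) < 1 := by
  rcases (spectrum ℂ (exp B)).eq_empty_or_nonempty with h | h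
  · simp [spectralRadius, h]
  refine spectrum.spectralRadius_lt_of_forall_lt_of_nonempty h fun z hz => ?_
  obtain ⟨μ, hμ, rfl⟩ := spectrum_exp_subset B hz
  rw [← NNReal.coe_lt_coe, coe_nnnorm, Complex.norm_exp, NNReal.coe_one, Real.exp_lt_one_iff]
  exact hB μ hμ

theorem antitone_dotProduct_exp_smul_mul_mul_exp_smul_mulVec {A D Q : Matrix ι ι ℝ}
    (hQ : Q.PosSemidef) (h : A * D + D * Aᵀ + Q = 0) (v : ι → ℝ) :
    Antitone fun t : ℝ => v ⬝ᵥ ((exp (t • A) * D * exp (t • Aᵀ)) *ᵥ v) := by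
  let L : Matrix ι ι ℝ →ₗ[ℝ] ℝ :=
    { toFun M := v ⬝ᵥ (M *ᵥ v)
      map_add' M N := by rw [add_mulVec, dotProduct_add]
      map_smul' c M := by rw [smul_mulVec, dotProduct_smul, RingHom.id_apply] }
  have hderiv (t : ℝ) : HasDerivAt (fun s : ℝ => v ⬝ᵥ ((exp (s • A) * D * exp (s • Aᵀ)) *ᵥ v))
      (L (exp (t • A) * (A * D + D * Aᵀ) * exp (t • Aᵀ))) t :=
    L.toContinuousLinearMap.hasFDerivAt.comp_hasDerivAt t
      (hasDerivAt_exp_smul_mul_mul_exp_smul A Aᵀ D t)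
  refine antitone_of_deriv_nonpos (fun t => (hderiv t).differentiableAt) fun t => ?_
  have hflow : (exp (t • A))ᴴ = exp (t • Aᵀ) := by
    rw [conjTranspose_eq_transpose_of_trivial, ← exp_transpose, transpose_smul]
  rw [(hderiv t).deriv, eq_neg_of_add_eq_zero_left h, ← hflow]
  simpa [L, Matrix.mul_neg, Matrix.neg_mul, neg_mulVec] using
    (hQ.mul_mul_conjTranspose_same (exp (t • A))).dotProduct_mulVec_nonneg v

end Matrix

theorem IsHurwitz.tendsto_exp_pow {n : ℕ} {A : Matrix (Fin n) (Fin n) ℝ} (hA : IsHurwitz A) :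
    Tendsto (fun k : ℕ => exp A ^ k) atTop (𝓝 0) := by
  let f := (Algebra.ofId ℝ ℂ).mapMatrix (m := Fin n)
  have hf : Continuous f := continuous_id.matrix_map Complex.continuous_ofReal
  have hc : Tendsto (fun k : ℕ => f (exp A ^ k)) atTop (𝓝 0) := by
    have hexp : f (exp A) = exp (A.map (Complex.ofReal ·)) := map_exp f hf A
    simp only [map_pow, hexp]
    exact tendsto_pow_atTop_nhds_zero_of_spectralRadius_lt_one
      (Matrix.spectralRadius_exp_lt_one hA)
  have hre := ((continuous_id.matrix_map Complex.continuous_re).tendsto 0).comp hc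
  convert hre using 2 with k
  · ext i j
    simp [f]
  · simp

theorem IsHurwitz.posSemidef_of_mul_add_mul_transpose_add_eq_zero {n : ℕ}
    {A D Q : Matrix (Fin n) (Fin n) ℝ} (hA : IsHurwitz A) (hD : D.IsSymm) (hQ : Q.PosSemidef)
    (h : A * D + D * Aᵀ + Q = 0) : D.PosSemidef := by
  refine .of_dotProduct_mulVec_nonneg (isHermitian_iff_isSymm.mpr hD) fun v => ?_
  set φ := fun t : ℝ => v ⬝ᵥ ((exp (t • A) * D * exp (t • Aᵀ)) *ᵥ v)
  have hφ : Antitone φ := antitone_dotProduct_exp_smul_mul_mul_exp_smul_mulVec hQ h v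
  have hφ_nat (k : ℕ) : φ k = v ⬝ᵥ ((exp A ^ k * D * (exp A ^ k)ᵀ) *ᵥ v) := by
    simp only [φ, Nat.cast_smul_eq_nsmul, Matrix.exp_nsmul, exp_transpose, transpose_pow]
  have hlim : Tendsto (fun k : ℕ => φ k) atTop (𝓝 0) := by
    have hP := hA.tendsto_exp_pow
    have hconj : Tendsto (fun k : ℕ => exp A ^ k * D * (exp A ^ k)ᵀ) atTop (𝓝 0) := by
      simpa using (hP.mul_const D).mul ((continuous_id.matrix_transpose.tendsto 0).comp hP)
    have hquad : Continuous fun M : Matrix (Fin n) (Fin n) ℝ => v ⬝ᵥ (M *ᵥ v) :=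
      continuous_const.dotProduct (continuous_id.matrix_mulVec continuous_const)
    simpa [hφ_nat, Function.comp_def] using (hquad.tendsto 0).comp hconj
  have hφ0 : φ 0 = v ⬝ᵥ (D *ᵥ v) := by simp [φ]
  simpa [hφ0] using le_of_tendsto hlim (.of_forall fun k => hφ (Nat.cast_nonneg k))

theorem stmt_0_general {n : ℕ} (A_K W S Xhat X : Matrix (Fin n) (Fin n) ℝ) (β : ℝ)
    (hA : IsHurwitz A_K)
    (hS : S.PosSemidef)
    (hXhat : Xhat.IsSymm) (hX : X.IsSymm)
    (hLyap : A_K * Xhat + Xhat * A_Kᵀ + W = 0)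
    (hRic : A_K * X + X * A_Kᵀ + (β ^ 2)⁻¹ • (X * S * X) + W = 0) :
    (X - Xhat).PosSemidef := by
  have hQ : ((β ^ 2)⁻¹ • (X * S * X)).PosSemidef := by
    have hXS := hS.mul_mul_conjTranspose_same X
    rw [conjTranspose_eq_transpose_of_trivial, hX.eq] at hXS
    exact hXS.smul (by positivity)
  refine hA.posSemidef_of_mul_add_mul_transpose_add_eq_zero (hX.sub hXhat) hQ ?_
  calc A_K * (X - Xhat) + (X - Xhat) * A_Kᵀ + (β ^ 2)⁻¹ • (X * S * X)
      = (A_K * X + X * A_Kᵀ + (β ^ 2)⁻¹ • (X * S * X) + W)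
          - (A_K * Xhat + Xhat * A_Kᵀ + W) := by
        rw [Matrix.mul_sub, Matrix.sub_mul]; abel
    _ = 0 := by rw [hRic, hLyap, sub_zero]

/-- If `A_K` is Hurwitz, `X̂` solves the Lyapunov equation
`A_K X̂ + X̂ A_Kᵀ + W = 0`, and `X` solves the Riccati equation
`A_K X + X A_Kᵀ + β⁻² X S X + W = 0` with `S` positive semidefinite,
then `X - X̂` is positive semidefinite. -/
theorem stmt_0 {n : ℕ} (A_K W S Xhat X : Matrix (Fin n) (Fin n) ℝ) (β : ℝ)
    (hβ : 0 < β)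
    (hA : IsHurwitz A_K)
    (hW : W.PosSemidef) (hS : S.PosSemidef)
    (hXhat : Xhat.IsSymm) (hX : X.IsSymm)
    (hLyap : A_K * Xhat + Xhat * A_Kᵀ + W = 0)
    (hRic : A_K * X + X * A_Kᵀ + (β ^ 2)⁻¹ • (X * S * X) + W = 0) :
    (X - Xhat).PosSemidef :=
  stmt_0_general A_K W S Xhat X β hA hS hXhat hX hLyap hRic
end

section
/- Let f : ℝᵐˣⁿ → ℝ be a continuous function defined on an open set D, suppose there exists a convex set F ⊆ ℝ × ℝ^N, a set L ⊆ ℝᵐˣⁿ × ℝ × ℝ^M, and a bijection Φ : L → F whose first output coordinate is the γ-component, such that the projection π(L) of L onto the (x,γ)-coordinates satisfies epi_>(f) ⊆ π(L) ⊆ cl(epi_≥(f)). Then inf_{x∈D} f(x) = inf{γ : (γ,ζ) ∈ F}. -/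
open Matrix

/-- ECL value equivalence: if `f : ℝ^{m×n} → ℝ` is continuous on an open set
`D`, and there are a convex set `F ⊆ ℝ × ℝ^N`, a lifted set
`L ⊆ ℝ^{m×n} × ℝ × ℝ^M`, and a bijection `Φ : L → F` whose first output
coordinate is the `γ`-component, such that the projection `π(L)` of `L` onto
the `(x,γ)`-coordinates satisfies `epi_>(f) ⊆ π(L) ⊆ cl(epi_≥(f))`, then
`inf_{x ∈ D} f(x) = inf {γ : (γ,ζ) ∈ F}` (as extended reals). -/
theorem stmt_5 {m n N M : ℕ}
    (D : Set (Matrix (Fin m) (Fin n) ℝ)) (hD : IsOpen D)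
    (f : Matrix (Fin m) (Fin n) ℝ → ℝ) (hf : ContinuousOn f D)
    (F : Set (ℝ × (Fin N → ℝ))) (hF : Convex ℝ F)
    (L : Set (Matrix (Fin m) (Fin n) ℝ × ℝ × (Fin M → ℝ)))
    (Φ : Matrix (Fin m) (Fin n) ℝ × ℝ × (Fin M → ℝ) → ℝ × (Fin N → ℝ))
    (hΦ : Set.BijOn Φ L F)
    (hγ : ∀ p ∈ L, (Φ p).1 = p.2.1)
    (hlow : {q : Matrix (Fin m) (Fin n) ℝ × ℝ | q.1 ∈ D ∧ f q.1 < q.2}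
        ⊆ {q | ∃ ξ, (q.1, q.2, ξ) ∈ L})
    (hup : {q : Matrix (Fin m) (Fin n) ℝ × ℝ | ∃ ξ, (q.1, q.2, ξ) ∈ L}
        ⊆ closure {q : Matrix (Fin m) (Fin n) ℝ × ℝ | q.1 ∈ D ∧ f q.1 ≤ q.2}) :
    sInf ((fun x => (f x : EReal)) '' D)
      = sInf ((fun p : ℝ × (Fin N → ℝ) => (p.1 : EReal)) '' F) := by
  classical
  set S : Set (Matrix (Fin m) (Fin n) ℝ × ℝ) := {q | ∃ ξ, (q.1, q.2, ξ) ∈ L} with hS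
  have hsets : ((fun p : ℝ × (Fin N → ℝ) => (p.1 : EReal)) '' F)
      = (fun q : Matrix (Fin m) (Fin n) ℝ × ℝ => (q.2 : EReal)) '' S := by
    ext y
    constructor
    · rintro ⟨p, hp, rfl⟩
      obtain ⟨l, hl, rfl⟩ := hΦ.surjOn hp
      exact ⟨(l.1, l.2.1), ⟨l.2.2, by simpa using hl⟩, by simp [hγ l hl]⟩
    · rintro ⟨q, ⟨ξ, hq⟩, rfl⟩
      exact ⟨Φ (q.1, q.2, ξ), hΦ.mapsTo hq, by simp [hγ _ hq]⟩
  rw [hsets]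
  apply le_antisymm
  · apply le_sInf
    rintro y ⟨q, hqS, rfl⟩
    have hcl := hup hqS
    have hclosed : IsClosed {q : Matrix (Fin m) (Fin n) ℝ × ℝ |
        sInf ((fun x => (f x : EReal)) '' D) ≤ (q.2 : EReal)} := by
      have hc : Continuous fun q : Matrix (Fin m) (Fin n) ℝ × ℝ => (q.2 : EReal) :=
        continuous_coe_real_ereal.comp continuous_snd
      exact isClosed_Ici.preimage hc
    have hsub : {q : Matrix (Fin m) (Fin n) ℝ × ℝ | q.1 ∈ D ∧ f q.1 ≤ q.2}
        ⊆ {q | sInf ((fun x => (f x : EReal)) '' D) ≤ (q.2 : EReal)} := by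
      rintro q ⟨hq1, hq2⟩
      calc sInf ((fun x => (f x : EReal)) '' D) ≤ (f q.1 : EReal) :=
            sInf_le ⟨q.1, hq1, rfl⟩
        _ ≤ (q.2 : EReal) := EReal.coe_le_coe_iff.mpr hq2
    exact (closure_minimal hsub hclosed) hcl
  · apply le_sInf
    rintro y ⟨x, hx, rfl⟩
    by_contra h
    push_neg at h
    obtain ⟨r, hr1, hr2⟩ := EReal.exists_between_coe_real h
    have hmem : ((x, r) : Matrix (Fin m) (Fin n) ℝ × ℝ) ∈ S :=
      hlow ⟨hx, EReal.coe_lt_coe_iff.mp hr1⟩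
    have hle : sInf ((fun q : Matrix (Fin m) (Fin n) ℝ × ℝ => (q.2 : EReal)) '' S)
        ≤ (r : EReal) := sInf_le ⟨(x, r), hmem, rfl⟩
    exact absurd (lt_of_le_of_lt hle hr2) (lt_irrefl _)
end

section
/- For β = 1 in the scalar example (A=-1, B=B_w=1, Q₂=0, Q_∞=R₂=R_∞=1), the infimum of J_mix(k) = k²·X_k over K₁ = {k < 0} equals 0 but is not attained: J_mix(k) > 0 for every k ∈ K₁, while J_mix(k) → 0 as k → 0⁻. -/
open Filter Set

lemma num_pos (k : ℝ) (hk : k < 0) : 0 < 1 - k - Real.sqrt (-2 * k) := by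
  set s := Real.sqrt (-2 * k) with hs
  have hsq : s ^ 2 = -2 * k := by
    rw [hs, Real.sq_sqrt (by linarith)]
  have hk' : k = -s ^ 2 / 2 := by linarith
  rw [hk']
  nlinarith [sq_nonneg (s - 1)]

lemma pos_pt (k : ℝ) (hk : k < 0) :
    0 < k ^ 2 * ((1 - k - Real.sqrt (-2 * k)) / (k ^ 2 + 1)) := by
  have h1 := num_pos k hk
  have h2 : (0:ℝ) < k ^ 2 + 1 := by positivity
  have h3 : (0:ℝ) < k ^ 2 := by nlinarith
  exact mul_pos h3 (div_pos h1 h2)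

lemma tend : Tendsto (fun k : ℝ => k ^ 2 * ((1 - k - Real.sqrt (-2 * k)) / (k ^ 2 + 1)))
    (nhdsWithin 0 (Iio 0)) (nhds 0) := by
  have hc : Continuous (fun k : ℝ => k ^ 2 * ((1 - k - Real.sqrt (-2 * k)) / (k ^ 2 + 1))) := by
    apply Continuous.mul (by continuity)
    apply Continuous.div (by continuity) (by continuity)
    intro x; positivity
  exact (hc.tendsto' 0 0 (by norm_num)).mono_left nhdsWithin_le_nhds

/-- For `β = 1` in the scalar example (`A = -1`, `B = B_w = 1`, `Q₂ = 0`,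
`Q_∞ = R₂ = R_∞ = 1`), the infimum of `J_mix(k) = k²·X_k` over
`K₁ = {k : k < 0}`, with `X_k = (1-k-√(-2k))/(k²+1)`, equals `0` but is not
attained: `J_mix(k) > 0` for every `k < 0`, while `J_mix(k) → 0` as
`k → 0⁻`. -/
theorem stmt_9 :
    (∀ k : ℝ, k < 0 →
      0 < k ^ 2 * ((1 - k - Real.sqrt (-2 * k)) / (k ^ 2 + 1))) ∧
    Tendsto (fun k : ℝ => k ^ 2 * ((1 - k - Real.sqrt (-2 * k)) / (k ^ 2 + 1)))
      (nhdsWithin 0 (Iio 0)) (nhds 0) ∧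
    sInf ((fun k : ℝ => k ^ 2 * ((1 - k - Real.sqrt (-2 * k)) / (k ^ 2 + 1))) ''
      Iio 0) = 0 := by
  refine ⟨pos_pt, tend, ?_⟩
  have hglb : IsGLB ((fun k : ℝ => k ^ 2 * ((1 - k - Real.sqrt (-2 * k)) / (k ^ 2 + 1))) ''
      Iio 0) 0 := by
    constructor
    · rintro y ⟨k, hk, rfl⟩
      exact (pos_pt k hk).le
    · intro b hb
      have hev : ∀ᶠ k in nhdsWithin (0:ℝ) (Iio 0),
          b ≤ k ^ 2 * ((1 - k - Real.sqrt (-2 * k)) / (k ^ 2 + 1)) := by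
        filter_upwards [self_mem_nhdsWithin] with k hk
        exact hb ⟨k, hk, rfl⟩
      exact ge_of_tendsto tend hev
  exact hglb.csInf_eq ⟨_, ⟨-1, by norm_num, rfl⟩⟩
end

section
/- Suppose a differentiable function f : D → ℝ on an open set D ⊆ ℝᵈ admits an extended convex lifting (L, F, Φ) such that every point of D is non-degenerate (i.e., (x, f(x)) ∈ π(L) for all x ∈ D). Then every stationary point x* ∈ D with ∇f(x*) = 0 is a global minimizer of f over D. -/
/-!
Lift `xs` and `x` to `L` and join their images in the convex set `F` by a segment. Pulling the
segment back by `Ψ` gives a differentiable curve in `L` whose `γ`-coordinate interpolates linearly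
from `f xs` to `f x` and whose `x`-coordinate `X` starts at `xs`. Since `π(L)` lies in the closure
of the epigraph and `f` is continuous, `f (X t) ≤ γ(t)` as long as `X t ∈ D`. Because `f` is
stationary at `xs`, `t ↦ f (X t) - γ(t)` has derivative `f xs - f x` at `0`, where it attains a
local maximum on `[0, 1]`; hence `f xs ≤ f x`.
-/

open Set Filter Topology AffineMap

theorem le_of_mem_closure_epigraph {X : Type*} [TopologicalSpace X] {D : Set X} {f : X → ℝ}
    {x : X} {γ : ℝ} (hx : (x, γ) ∈ closure {q : X × ℝ | q.1 ∈ D ∧ f q.1 ≤ q.2})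
    (hf : ContinuousAt f x) : f x ≤ γ :=
  ContinuousWithinAt.closure_le hx (hf.comp continuousAt_fst).continuousWithinAt
    continuousAt_snd.continuousWithinAt fun _ hq => hq.2

theorem IsLocalMaxOn.hasDerivWithinAt_nonpos {f : ℝ → ℝ} {f' a : ℝ} {s : Set ℝ}
    (h : IsLocalMaxOn f s a) (hf : HasDerivWithinAt f f' s a) (hs : ∃ᶠ x in 𝓝[>] a, x ∈ s) :
    f' ≤ 0 := by
  simpa using h.hasFDerivWithinAt_nonpos hf (one_mem_posTangentConeAt_iff_frequently.2 hs)

theorem le_of_hasFDerivAt_eq_zero_of_le_lineMap {E : Type*} [NormedAddCommGroup E]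
    [NormedSpace ℝ E] {f : E → ℝ} {X : ℝ → E} {b : ℝ} (hf : HasFDerivAt f (0 : E →L[ℝ] ℝ) (X 0))
    (hX : DifferentiableWithinAt ℝ X (Icc 0 1) 0)
    (hle : ∀ᶠ t in 𝓝[Icc 0 1] 0, f (X t) ≤ lineMap (f (X 0)) b t) : f (X 0) ≤ b := by
  set g : ℝ → ℝ := fun t => f (X t) - lineMap (f (X 0)) b t
  have hg : HasDerivWithinAt g (0 - (b - f (X 0))) (Icc 0 1) 0 :=
    (hf.comp_hasDerivWithinAt 0 hX.hasDerivWithinAt).sub hasDerivWithinAt_lineMap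
  have hmax : IsLocalMaxOn g (Icc 0 1) 0 := hle.mono fun t ht => by
    simpa [g] using ht
  have hIcc : ∃ᶠ t in 𝓝[>] (0 : ℝ), t ∈ Icc (0 : ℝ) 1 :=
    Eventually.frequently (Icc_mem_nhdsGT zero_lt_one)
  linarith [hmax.hasDerivWithinAt_nonpos hg hIcc]

theorem stmt_16_general {d dξ N : ℕ}
    (D : Set (Fin d → ℝ)) (hD : IsOpen D)
    (f : (Fin d → ℝ) → ℝ) (hf : DifferentiableOn ℝ f D)
    (L : Set ((Fin d → ℝ) × ℝ × (Fin dξ → ℝ)))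
    (F : Set (ℝ × (Fin N → ℝ))) (hF : Convex ℝ F)
    (Φ : (Fin d → ℝ) × ℝ × (Fin dξ → ℝ) → ℝ × (Fin N → ℝ))
    (Ψ : ℝ × (Fin N → ℝ) → (Fin d → ℝ) × ℝ × (Fin dξ → ℝ))
    (hΦ : Set.BijOn Φ L F)
    (hΨ : ∀ p ∈ L, Ψ (Φ p) = p)
    (hΨsm : ContDiffOn ℝ 2 Ψ F)
    (hγ : ∀ p ∈ L, (Φ p).1 = p.2.1)
    (hup : {q : (Fin d → ℝ) × ℝ | ∃ ξ, (q.1, q.2, ξ) ∈ L}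
        ⊆ closure {q : (Fin d → ℝ) × ℝ | q.1 ∈ D ∧ f q.1 ≤ q.2})
    (hnondeg : ∀ x ∈ D, ∃ ξ, (x, f x, ξ) ∈ L)
    (xs : Fin d → ℝ) (hxs : xs ∈ D) (hstat : fderiv ℝ f xs = 0) :
    ∀ x ∈ D, f xs ≤ f x := by
  have hfD : ∀ y ∈ D, DifferentiableAt ℝ f y := fun y hy => hf.differentiableAt (hD.mem_nhds hy)
  have hΨF : MapsTo Ψ F L := LeftInvOn.mapsTo hΨ hΦ.surjOn
  have hΦΨ : RightInvOn Ψ Φ F := hΦ.image_eq ▸ LeftInvOn.rightInvOn_image hΨ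
  have hΨγ : ∀ q ∈ F, (Ψ q).2.1 = q.1 := fun q hq => by rw [← hγ _ (hΨF hq), hΦΨ hq]
  have h_epi : ∀ p ∈ L, p.1 ∈ D → f p.1 ≤ p.2.1 := fun p hp hpD =>
    le_of_mem_closure_epigraph (hup ⟨p.2.2, hp⟩) (hfD _ hpD).continuousAt
  intro x hx
  obtain ⟨ξs, hs⟩ := hnondeg xs hxs
  obtain ⟨ξx, hx'⟩ := hnondeg x hx
  set c : ℝ →ᵃ[ℝ] ℝ × (Fin N → ℝ) := lineMap (Φ (xs, f xs, ξs)) (Φ (x, f x, ξx))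
  have hcF : MapsTo c (Icc 0 1) F := fun t ht => hF.lineMap_mem (hΦ.mapsTo hs) (hΦ.mapsTo hx') ht
  set X : ℝ → (Fin d → ℝ) := fun t => (Ψ (c t)).1
  have hX0 : X 0 = xs := by simp [X, c, hΨ _ hs]
  have hXdiff : DifferentiableWithinAt ℝ X (Icc 0 1) 0 :=
    ((hΨsm.differentiableOn two_ne_zero _ (hcF ⟨le_rfl, zero_le_one⟩)).comp 0
      hasDerivAt_lineMap.differentiableAt.differentiableWithinAt hcF).fst
  have hXD : ∀ᶠ t in 𝓝[Icc 0 1] 0, X t ∈ D := hXdiff.continuousWithinAt (hD.mem_nhds (hX0 ▸ hxs))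
  rw [← hX0]
  refine le_of_hasFDerivAt_eq_zero_of_le_lineMap ?_ hXdiff ?_
  · rw [hX0, ← hstat]
    exact (hfD xs hxs).hasFDerivAt
  · filter_upwards [hXD, self_mem_nhdsWithin] with t hXt ht
    have := h_epi _ (hΨF (hcF ht)) hXt
    rwa [hΨγ _ (hcF ht), fst_lineMap, hγ _ hs, hγ _ hx', ← hX0] at this

/-- ECL global-optimality certificate: if a differentiable function
`f : D → ℝ` on an open set `D ⊆ ℝᵈ` admits an extended convex lifting
`(L, F, Φ)` (with `epi_>(f) ⊆ π(L) ⊆ cl(epi_≥(f))`, `F` convex, `Φ` a `C²`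
diffeomorphism from `L` to `F` whose first output equals the `γ`-component)
such that every point of `D` is non-degenerate (`(x, f x) ∈ π(L)` for all
`x ∈ D`), then every stationary point `x* ∈ D` with `∇f(x*) = 0` is a
global minimizer of `f` over `D`. -/
theorem stmt_16 {d dξ N : ℕ}
    (D : Set (Fin d → ℝ)) (hD : IsOpen D)
    (f : (Fin d → ℝ) → ℝ) (hf : DifferentiableOn ℝ f D)
    (L : Set ((Fin d → ℝ) × ℝ × (Fin dξ → ℝ)))
    (F : Set (ℝ × (Fin N → ℝ))) (hF : Convex ℝ F)
    (Φ : (Fin d → ℝ) × ℝ × (Fin dξ → ℝ) → ℝ × (Fin N → ℝ))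
    (Ψ : ℝ × (Fin N → ℝ) → (Fin d → ℝ) × ℝ × (Fin dξ → ℝ))
    (hΦ : Set.BijOn Φ L F)
    (hΨ : ∀ p ∈ L, Ψ (Φ p) = p)
    (hΦsm : ContDiffOn ℝ 2 Φ L) (hΨsm : ContDiffOn ℝ 2 Ψ F)
    (hγ : ∀ p ∈ L, (Φ p).1 = p.2.1)
    (hlow : {q : (Fin d → ℝ) × ℝ | q.1 ∈ D ∧ f q.1 < q.2}
        ⊆ {q | ∃ ξ, (q.1, q.2, ξ) ∈ L})
    (hup : {q : (Fin d → ℝ) × ℝ | ∃ ξ, (q.1, q.2, ξ) ∈ L}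
        ⊆ closure {q : (Fin d → ℝ) × ℝ | q.1 ∈ D ∧ f q.1 ≤ q.2})
    (hnondeg : ∀ x ∈ D, ∃ ξ, (x, f x, ξ) ∈ L)
    (xs : Fin d → ℝ) (hxs : xs ∈ D) (hstat : fderiv ℝ f xs = 0) :
    ∀ x ∈ D, f xs ≤ f x :=
  stmt_16_general D hD f hf L F hF Φ Ψ hΦ hΨ hΨsm hγ hup hnondeg xs hxs hstat
end
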